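/- For distinct primes p < q < r, Ψ_{pqr}(x) = Φ_{pq}(x)·Ψ_{pq}(x^r). -/

import Mathlib

/-!
Expanding Φₙ(x)Ψₙ(x) = xⁿ - 1 by x ↦ xʳ gives Φₙ(xʳ)Ψₙ(xʳ) = x^{nr} - 1, and for a prime r ∤ n
one has Φₙ(xʳ) = Φₙᵣ(x)Φₙ(x); dividing by the monic Φₙᵣ leaves Ψₙᵣ(x) = Φₙ(x)Ψₙ(xʳ).
-/

open Polynomial

/-- The reciprocal cyclotomic polynomial Ψₙ(x) = (xⁿ - 1)/Φₙ(x). -/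
noncomputable def Psi (n : ℕ) : ℤ[X] := (X ^ n - 1) /ₘ cyclotomic n ℤ

theorem cyclotomic_mul_psi (n : ℕ) : cyclotomic n ℤ * Psi n = X ^ n - 1 := by
  obtain ⟨c, hc⟩ := cyclotomic.dvd_X_pow_sub_one n ℤ
  rw [Psi, hc, mul_divByMonic_cancel_left _ (cyclotomic.monic n ℤ)]

theorem psi_eq_of_cyclotomic_mul_eq {n : ℕ} {f : ℤ[X]} (h : cyclotomic n ℤ * f = X ^ n - 1) :
    Psi n = f := by
  rw [Psi, ← h, mul_divByMonic_cancel_left _ (cyclotomic.monic n ℤ)]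

theorem psi_mul_prime {n r : ℕ} (hr : r.Prime) (hrn : ¬ r ∣ n) :
    Psi (n * r) = cyclotomic n ℤ * (Psi n).comp (X ^ r) := by
  apply psi_eq_of_cyclotomic_mul_eq
  have h := congrArg (expand ℤ r) (cyclotomic_mul_psi n)
  rw [map_mul, cyclotomic_expand_eq_cyclotomic_mul hr hrn, expand_eq_comp_X_pow] at h
  simp only [map_sub, map_pow, map_one, expand_X, ← pow_mul, mul_comm r n] at h
  rw [← h]
  ring

theorem psi_three_primes_factor_general (p q r : ℕ) (hp : p.Prime) (hr : r.Prime)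
    (hpq : p < q) (hqr : q < r) :
    Psi (p * q * r) = cyclotomic (p * q) ℤ * (Psi (p * q)).comp (X ^ r) := by
  refine psi_mul_prime hr fun hdvd => ?_
  rcases hr.dvd_mul.mp hdvd with h | h
  · exact absurd (Nat.le_of_dvd hp.pos h) (by omega)
  · exact absurd (Nat.le_of_dvd (by linarith [hp.pos]) h) (by omega)

theorem psi_three_primes_factor (p q r : ℕ) (hp : p.Prime) (hq : q.Prime) (hr : r.Prime)
    (hpq : p < q) (hqr : q < r) :
    Psi (p * q * r) = cyclotomic (p * q) ℤ * (Psi (p * q)).comp (X ^ r) :=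
  psi_three_primes_factor_general p q r hp hr hpq hqr
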